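/- arXiv:1407.3467 — 5 statements merged into one kernel-verified Lean document; each statement's English description precedes it below -/
import Mathlib

section
/- For every integer n ≥ 1, the product over j from 0 to n-1 of Γ((n+3+j)/2)·Γ(1/2) / (Γ((4+j)/2)·Γ((1+j)/2)·Γ((2+j)/2)), divided by n!, equals the product over k from 1 to n of the k-th Catalan number Cat(k) = (1/(k+1))·binomial(2k,k). -/
/-!
Induction on `n`. Going from `n` to `n + 1` shifts the window of numerator Gammas by one, so the
product gains the factor `Γ(n + 3/2) Γ(n + 2) Γ(1/2) / (Γ((n+3)/2) Γ((n+4)/2) Γ((n+1)/2) Γ((n+2)/2))`.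
Legendre duplication turns every pair `Γ((m+1)/2) Γ((m+2)/2)` into `m! √π / 2^m`, so this factor is
`(2n+2)! / ((n+2)! n!) = (n + 1) Cat(n + 1)`; the `n + 1` is absorbed by the factorial.
-/

open Real Finset

open scoped Nat

theorem Finset.prod_range_succ_add_mul {M : Type*} [CommMonoid M] (f : ℕ → M) (n : ℕ) :
    (∏ j ∈ range (n + 1), f (n + 1 + j)) * f n =
      (∏ j ∈ range n, f (n + j)) * (f (2 * n) * f (2 * n + 1)) := by
  have h := prod_range_succ' (fun j => f (n + j)) (n + 1)
  rw [prod_range_succ, prod_range_succ] at h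
  simp only [add_zero, ← add_assoc, ← two_mul] at h
  rw [mul_assoc] at h
  simpa only [add_right_comm n _ 1] using h.symm

theorem Real.Gamma_natCast_add_one_div_two_mul_Gamma_natCast_add_two_div_two (m : ℕ) :
    Gamma (((m : ℝ) + 1) / 2) * Gamma (((m : ℝ) + 2) / 2) = m ! * √π / 2 ^ m := by
  have h := Gamma_mul_Gamma_add_half (((m : ℝ) + 1) / 2)
  rw [show ((m : ℝ) + 1) / 2 + 1 / 2 = ((m : ℝ) + 2) / 2 by ring,
    show 2 * (((m : ℝ) + 1) / 2) = m + 1 by ring, Gamma_nat_eq_factorial,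
    show (1 : ℝ) - (m + 1) = -(m : ℝ) by ring, rpow_neg zero_le_two, rpow_natCast] at h
  rw [h, div_eq_mul_inv]
  ring

theorem succ_mul_catalan_succ_mul_factorial_mul_factorial (n : ℕ) :
    (n + 1) * catalan (n + 1) * ((n + 2)! * n !) = (2 * (n + 1))! := by
  have hcat := succ_mul_catalan_eq_centralBinom (n + 1)
  have hbinom := Nat.add_choose_mul_factorial_mul_factorial (n + 1) (n + 1)
  rw [← two_mul, ← Nat.centralBinom_eq_two_mul_choose, ← hcat] at hbinom
  rw [← hbinom, Nat.factorial_succ (n + 1), Nat.factorial_succ n]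
  ring

theorem catalan_eq_one_div_succ_mul_choose (k : ℕ) :
    (catalan k : ℝ) = 1 / (k + 1) * (2 * k).choose k := by
  rw [← Nat.centralBinom_eq_two_mul_choose, ← succ_mul_catalan_eq_centralBinom]
  push_cast
  field_simp

theorem Real.Gamma_ratio_eq_succ_mul_catalan (n : ℕ) :
    Gamma ((2 * n + 3) / 2) * Gamma ((2 * n + 4) / 2) * Gamma (1 / 2) /
        (Gamma ((n + 3) / 2) * Gamma ((n + 4) / 2) * (Gamma ((n + 1) / 2) * Gamma ((n + 2) / 2))) =
      (n + 1) * catalan (n + 1) := by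
  have hnum := Gamma_natCast_add_one_div_two_mul_Gamma_natCast_add_two_div_two (2 * (n + 1))
  have hden₁ := Gamma_natCast_add_one_div_two_mul_Gamma_natCast_add_two_div_two (n + 2)
  have hden₂ := Gamma_natCast_add_one_div_two_mul_Gamma_natCast_add_two_div_two n
  push_cast at hnum hden₁
  rw [show (2 * ((n : ℝ) + 1) + 1) / 2 = (2 * n + 3) / 2 by ring,
    show (2 * ((n : ℝ) + 1) + 2) / 2 = (2 * n + 4) / 2 by ring] at hnum
  rw [show ((n : ℝ) + 2 + 1) / 2 = (n + 3) / 2 by ring,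
    show ((n : ℝ) + 2 + 2) / 2 = (n + 4) / 2 by ring] at hden₁
  have hcat := congrArg (Nat.cast (R := ℝ)) (succ_mul_catalan_succ_mul_factorial_mul_factorial n)
  push_cast at hcat
  rw [hnum, hden₁, hden₂, Gamma_one_half_eq, ← hcat]
  have hpi : √π ≠ 0 := (sqrt_pos.mpr pi_pos).ne'
  field_simp
  ring

/-- The `j`-th factor of Zeilberger's evaluation of Morris' constant term at `a = 2, b = 0, c = 1/2`. -/
noncomputable def morrisFactor (n j : ℕ) : ℝ :=
  Gamma (((n : ℝ) + 3 + j) / 2) * Gamma (1 / 2) /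
    (Gamma ((4 + (j : ℝ)) / 2) * Gamma ((1 + (j : ℝ)) / 2) * Gamma ((2 + (j : ℝ)) / 2))

theorem prod_morrisFactor_succ (n : ℕ) :
    ∏ j ∈ range (n + 1), morrisFactor (n + 1) j =
      (∏ j ∈ range n, morrisFactor n j) * ((n + 1) * catalan (n + 1)) := by
  set a : ℕ → ℝ := fun m => Gamma (((m : ℝ) + 3) / 2) with ha
  set B : ℕ → ℝ := fun j =>
    Gamma ((4 + (j : ℝ)) / 2) * Gamma ((1 + (j : ℝ)) / 2) * Gamma ((2 + (j : ℝ)) / 2) with hB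
  have hfactor : ∀ m j, morrisFactor m j = a (m + j) * Gamma (1 / 2) / B j := by
    intro m j
    simp only [morrisFactor, ha, hB]
    push_cast
    ring_nf
  have hshift : ∏ j ∈ range (n + 1), a (n + 1 + j) =
      (∏ j ∈ range n, a (n + j)) * (a (2 * n) * a (2 * n + 1)) / a n :=
    eq_div_of_mul_eq (Gamma_pos_of_pos (by positivity)).ne' (prod_range_succ_add_mul a n)
  have hratio :
      a (2 * n) * a (2 * n + 1) * Gamma (1 / 2) / (a n * B n) = (n + 1) * catalan (n + 1) := by
    rw [← Gamma_ratio_eq_succ_mul_catalan n]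
    simp only [ha, hB]
    push_cast
    ring_nf
  simp only [hfactor, prod_div_distrib, prod_mul_distrib, prod_const, card_range,
    prod_range_succ B]
  rw [hshift, ← hratio]
  ring

theorem prod_morrisFactor_eq (n : ℕ) :
    ∏ j ∈ range n, morrisFactor n j = n ! * ∏ k ∈ Icc 1 n, (catalan k : ℝ) := by
  induction n with
  | zero => simp
  | succ n ih =>
    rw [prod_morrisFactor_succ, ih, prod_Icc_succ_top (by omega), Nat.factorial_succ]
    push_cast
    ring

theorem stmt_0_general (n : ℕ) :
    (∏ j ∈ Finset.range n,
        Gamma (((n : ℝ) + 3 + j) / 2) * Gamma (1 / 2) /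
          (Gamma ((4 + (j : ℝ)) / 2) * Gamma ((1 + (j : ℝ)) / 2) * Gamma ((2 + (j : ℝ)) / 2))) /
      (n.factorial : ℝ) =
    ∏ k ∈ Finset.Icc 1 n, (1 / ((k : ℝ) + 1) * (Nat.choose (2 * k) k : ℝ)) := by
  rw [prod_congr rfl fun k _ => (catalan_eq_one_div_succ_mul_choose k).symm]
  change (∏ j ∈ range n, morrisFactor n j) / _ = _
  rw [prod_morrisFactor_eq, mul_div_cancel_left₀ _ (by positivity)]

theorem stmt_0 (n : ℕ) (hn : 1 ≤ n) :
    (∏ j ∈ Finset.range n,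
        Gamma (((n : ℝ) + 3 + j) / 2) * Gamma (1 / 2) /
          (Gamma ((4 + (j : ℝ)) / 2) * Gamma ((1 + (j : ℝ)) / 2) * Gamma ((2 + (j : ℝ)) / 2))) /
      (n.factorial : ℝ) =
    ∏ k ∈ Finset.Icc 1 n, (1 / ((k : ℝ) + 1) * (Nat.choose (2 * k) k : ℝ)) :=
  stmt_0_general n
end

section
/- For every integer n ≥ 1, the ratio of the product over j from 0 to n-1 of Γ((n+3+j)/2)·Γ(1/2)/(Γ((4+j)/2)·Γ((1+j)/2)·Γ((2+j)/2)) to the product over j from 0 to n-1 of Γ((n+2+j)/2)·Γ(1/2)/(Γ((1+j)/2)·Γ((1+j)/2)·Γ((4+j)/2)) equals Γ((2n+2)/2)·Γ(1/2)/(Γ((n+2)/2)·Γ((n+1)/2)), and this common value equals 2^n. -/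
/-!
Writing `f j = Γ((n + 2 + j) / 2) / Γ((1 + j) / 2)`, the `j`-th factor of the numerator divided
by the `j`-th factor of the denominator is `f (j + 1) / f j`, so the ratio of the products
telescopes to `f n / f 0`, which is the middle expression. Legendre's duplication formula
`Γ(s) Γ(s + 1/2) = 2^(1 - 2s) √π Γ(2s)` at `s = (n + 1) / 2` evaluates it to `2^n`.
-/

open Real Finset

lemma Finset.prod_range_div_of_ne_zero {G₀ : Type*} [CommGroupWithZero G₀] (f : ℕ → G₀)
    (hf : ∀ j, f j ≠ 0) (n : ℕ) : ∏ j ∈ range n, f (j + 1) / f j = f n / f 0 := by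
  induction n with
  | zero => simp [div_self (hf 0)]
  | succ n ih =>
    rw [prod_range_succ, ih, div_mul_div_comm, mul_comm (f 0), mul_div_mul_left _ _ (hf n)]

lemma Real.Gamma_two_mul_mul_Gamma_one_half_div {s : ℝ} (hs : 0 < s) :
    Gamma (2 * s) * Gamma (1 / 2) / (Gamma (s + 1 / 2) * Gamma s) = 2 ^ (2 * s - 1) := by
  have hΓ : Gamma (2 * s) ≠ 0 := (Gamma_pos_of_pos (by positivity)).ne'
  have h2 : (2 : ℝ) ^ (1 - 2 * s) ≠ 0 := by positivity
  rw [mul_comm (Gamma (s + 1 / 2)), Gamma_mul_Gamma_add_half, Gamma_one_half_eq,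
    show 2 * s - 1 = -(1 - 2 * s) by ring, rpow_neg zero_le_two]
  field_simp

noncomputable def gammaQuot (x : ℝ) (j : ℕ) : ℝ :=
  Gamma ((x + 2 + j) / 2) / Gamma ((1 + j) / 2)

lemma gammaQuot_ne_zero {x : ℝ} (hx : 0 ≤ x) (j : ℕ) : gammaQuot x j ≠ 0 :=
  div_ne_zero (Gamma_pos_of_pos (by positivity)).ne' (Gamma_pos_of_pos (by positivity)).ne'

lemma factor_div_factor_eq_gammaQuot_div {x : ℝ} (hx : 0 ≤ x) (j : ℕ) :
    Gamma ((x + 3 + j) / 2) * Gamma (1 / 2) /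
          (Gamma ((4 + (j : ℝ)) / 2) * Gamma ((1 + (j : ℝ)) / 2) * Gamma ((2 + (j : ℝ)) / 2)) /
        (Gamma ((x + 2 + j) / 2) * Gamma (1 / 2) /
          (Gamma ((1 + (j : ℝ)) / 2) * Gamma ((1 + (j : ℝ)) / 2) * Gamma ((4 + (j : ℝ)) / 2))) =
      gammaQuot x (j + 1) / gammaQuot x j := by
  have hΓ : ∀ y : ℝ, 0 < y → Gamma y ≠ 0 := fun y hy => (Gamma_pos_of_pos hy).ne'
  have h1 := hΓ ((x + 3 + j) / 2) (by positivity)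
  have h2 := hΓ ((x + 2 + j) / 2) (by positivity)
  have h3 := hΓ ((4 + (j : ℝ)) / 2) (by positivity)
  have h4 := hΓ ((1 + (j : ℝ)) / 2) (by positivity)
  have h5 := hΓ ((2 + (j : ℝ)) / 2) (by positivity)
  have h6 := hΓ (1 / 2) (by norm_num)
  simp only [gammaQuot, Nat.cast_succ, show (x + 2 + (j + 1)) / 2 = (x + 3 + j) / 2 by ring,
    show (1 + ((j : ℝ) + 1)) / 2 = (2 + j) / 2 by ring]
  field_simp

theorem stmt_1_general (n : ℕ) :
    (∏ j ∈ Finset.range n,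
        Gamma (((n : ℝ) + 3 + j) / 2) * Gamma (1 / 2) /
          (Gamma ((4 + (j : ℝ)) / 2) * Gamma ((1 + (j : ℝ)) / 2) * Gamma ((2 + (j : ℝ)) / 2))) /
      (∏ j ∈ Finset.range n,
        Gamma (((n : ℝ) + 2 + j) / 2) * Gamma (1 / 2) /
          (Gamma ((1 + (j : ℝ)) / 2) * Gamma ((1 + (j : ℝ)) / 2) * Gamma ((4 + (j : ℝ)) / 2))) =
      Gamma ((2 * (n : ℝ) + 2) / 2) * Gamma (1 / 2) /
        (Gamma (((n : ℝ) + 2) / 2) * Gamma (((n : ℝ) + 1) / 2)) ∧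
    Gamma ((2 * (n : ℝ) + 2) / 2) * Gamma (1 / 2) /
        (Gamma (((n : ℝ) + 2) / 2) * Gamma (((n : ℝ) + 1) / 2)) = 2 ^ n := by
  have hn : (0 : ℝ) ≤ n := n.cast_nonneg
  constructor
  · rw [← prod_div_distrib, prod_congr rfl fun j _ => factor_div_factor_eq_gammaQuot_div hn j,
      prod_range_div_of_ne_zero _ (gammaQuot_ne_zero hn)]
    have hΓ : Gamma (((n : ℝ) + 1) / 2) ≠ 0 := (Gamma_pos_of_pos (by positivity)).ne'
    simp only [gammaQuot, Nat.cast_zero, add_zero]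
    rw [show ((n : ℝ) + 2 + n) / 2 = (2 * n + 2) / 2 by ring, add_comm 1 (n : ℝ)]
    field_simp
  · have hs : (0 : ℝ) < (n + 1) / 2 := by positivity
    have := Gamma_two_mul_mul_Gamma_one_half_div hs
    rwa [show 2 * (((n : ℝ) + 1) / 2) - 1 = n by ring, rpow_natCast,
      show 2 * (((n : ℝ) + 1) / 2) = (2 * n + 2) / 2 by ring,
      show ((n : ℝ) + 1) / 2 + 1 / 2 = (n + 2) / 2 by ring] at this

theorem stmt_1 (n : ℕ) (hn : 1 ≤ n) :
    (∏ j ∈ Finset.range n,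
        Gamma (((n : ℝ) + 3 + j) / 2) * Gamma (1 / 2) /
          (Gamma ((4 + (j : ℝ)) / 2) * Gamma ((1 + (j : ℝ)) / 2) * Gamma ((2 + (j : ℝ)) / 2))) /
      (∏ j ∈ Finset.range n,
        Gamma (((n : ℝ) + 2 + j) / 2) * Gamma (1 / 2) /
          (Gamma ((1 + (j : ℝ)) / 2) * Gamma ((1 + (j : ℝ)) / 2) * Gamma ((4 + (j : ℝ)) / 2))) =
      Gamma ((2 * (n : ℝ) + 2) / 2) * Gamma (1 / 2) /
        (Gamma (((n : ℝ) + 2) / 2) * Gamma (((n : ℝ) + 1) / 2)) ∧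
    Gamma ((2 * (n : ℝ) + 2) / 2) * Gamma (1 / 2) /
        (Gamma (((n : ℝ) + 2) / 2) * Gamma (((n : ℝ) + 1) / 2)) = 2 ^ n :=
  stmt_1_general n
end

section
/- For every integer n ≥ 2, (2^(n²+n)/n!)·∏_{j=0}^{n-1} Γ((n+2+j)/2)·Γ(1/2)/(Γ((1+j)/2)·Γ((1+j)/2)·Γ((4+j)/2)) equals 2^(n²)·∏_{k=1}^{n} Cat(k), where Cat(k) = (1/(k+1))·binomial(2k,k). -/
/-!
Induction on `n`. Going from `n` to `n + 1`, the window `∏_{j<n} Γ((n+2+j)/2)` loses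
`Γ((n+2)/2)` and gains `Γ(n+1) Γ(n+3/2)`, and the new weight `j = n` is added. Legendre's
duplication formula in the form `Γ((m+1)/2) Γ((m+2)/2) = m! √π / 2^m` turns the resulting
quotient into factorials, and it equals `2^(2n+1) Cat(n+1)`, the quotient of consecutive
right-hand sides.
-/

open Real Finset
open scoped Nat

lemma Gamma_succ_div_two_mul_Gamma_add_two_div_two (m : ℕ) :
    Gamma ((m + 1) / 2) * Gamma ((m + 2) / 2) = m ! * √π / 2 ^ m := by
  have h := Gamma_mul_Gamma_add_half ((m + 1) / 2)
  rw [show ((m : ℝ) + 1) / 2 + 1 / 2 = (m + 2) / 2 by ring,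
    show 2 * (((m : ℝ) + 1) / 2) = m + 1 by ring, show (1 : ℝ) - (m + 1) = -m by ring,
    rpow_neg zero_le_two, rpow_natCast, Gamma_nat_eq_factorial] at h
  rw [h, div_eq_mul_inv]
  ring

lemma prod_range_Gamma_shift_succ (n : ℕ) :
    (∏ j ∈ range (n + 1), Gamma (((n + 1 : ℕ) + 2 + j : ℝ) / 2)) * Gamma ((n + 2) / 2) =
      (∏ j ∈ range n, Gamma ((n + 2 + j : ℝ) / 2)) * ((2 * n + 1) ! * √π / 2 ^ (2 * n + 1)) := by
  calc _ = ∏ j ∈ range (n + 2), Gamma ((n + 2 + j : ℝ) / 2) := by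
          rw [prod_range_succ' _ (n + 1)]
          push_cast
          congr 1
          · exact prod_congr rfl fun j _ => by ring_nf
          · simp
    _ = _ := by
          rw [prod_range_succ, prod_range_succ, mul_assoc,
            ← Gamma_succ_div_two_mul_Gamma_add_two_div_two]
          push_cast
          ring_nf

lemma step_ratio_eq_two_pow_mul_catalan (n : ℕ) :
    2 ^ (2 * n + 2) / ((n : ℝ) + 1) * ((2 * n + 1) ! * √π / 2 ^ (2 * n + 1)) / Gamma ((n + 2) / 2) *
        (Gamma (1 / 2) / (Gamma ((1 + n) / 2) * Gamma ((1 + n) / 2) * Gamma ((4 + n) / 2))) =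
      2 ^ (2 * n + 1) * (1 / ((n + 1 : ℕ) + 1) * ((2 * (n + 1)).choose (n + 1) : ℝ)) := by
  have hGamma_pos : 0 < Gamma ((n + 2) / 2) := Gamma_pos_of_pos (by positivity)
  have hGamma_succ : Gamma ((4 + n) / 2) = (n + 2) / 2 * Gamma ((n + 2) / 2) := by
    rw [← Gamma_add_one (by positivity)]
    ring_nf
  have hGamma_duplication : Gamma ((1 + n) / 2) = n ! * √π / 2 ^ n / Gamma ((n + 2) / 2) := by
    rw [eq_div_iff hGamma_pos.ne', ← Gamma_succ_div_two_mul_Gamma_add_two_div_two, add_comm (1 : ℝ)]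
  rw [hGamma_succ, hGamma_duplication, Gamma_one_half_eq, Nat.cast_choose ℝ (by omega),
    show 2 * (n + 1) - (n + 1) = n + 1 by omega, show 2 * (n + 1) = 2 * n + 1 + 1 by ring]
  simp only [Nat.factorial_succ]
  push_cast
  field_simp
  ring

lemma two_pow_div_factorial_mul_prod_Gamma_eq (n : ℕ) :
    (2 : ℝ) ^ (n ^ 2 + n) / n ! * ((∏ j ∈ range n, Gamma ((n + 2 + j : ℝ) / 2)) *
      ∏ j ∈ range n, Gamma (1 / 2) / (Gamma ((1 + j) / 2) * Gamma ((1 + j) / 2) * Gamma ((4 + j) / 2))) =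
    (2 : ℝ) ^ (n ^ 2) * ∏ k ∈ Icc 1 n, (1 / ((k : ℝ) + 1) * (Nat.choose (2 * k) k : ℝ)) := by
  induction n with
  | zero => simp
  | succ n ih =>
    have hGamma_pos : 0 < Gamma ((n + 2) / 2) := Gamma_pos_of_pos (by positivity)
    have hwindow := (eq_div_iff hGamma_pos.ne').mpr (prod_range_Gamma_shift_succ n)
    have hih_mul_step := congrArg₂ (· * ·) ih (step_ratio_eq_two_pow_mul_catalan n)
    rw [hwindow, prod_range_succ _ n, Nat.factorial_succ, Nat.cast_mul, Nat.cast_succ, ← div_div,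
      prod_Icc_succ_top (Nat.le_add_left 1 n)]
    linear_combination hih_mul_step

theorem stmt_3_general (n : ℕ) :
    (2 : ℝ) ^ (n ^ 2 + n) / (n.factorial : ℝ) *
      ∏ j ∈ Finset.range n,
        Gamma (((n : ℝ) + 2 + j) / 2) * Gamma (1 / 2) /
          (Gamma ((1 + (j : ℝ)) / 2) * Gamma ((1 + (j : ℝ)) / 2) * Gamma ((4 + (j : ℝ)) / 2)) =
    (2 : ℝ) ^ (n ^ 2) *
      ∏ k ∈ Finset.Icc 1 n, (1 / ((k : ℝ) + 1) * (Nat.choose (2 * k) k : ℝ)) := by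
  rw [← two_pow_div_factorial_mul_prod_Gamma_eq n, ← prod_mul_distrib]
  simp_rw [mul_div_assoc]

theorem stmt_3 (n : ℕ) (hn : 2 ≤ n) :
    (2 : ℝ) ^ (n ^ 2 + n) / (n.factorial : ℝ) *
      ∏ j ∈ Finset.range n,
        Gamma (((n : ℝ) + 2 + j) / 2) * Gamma (1 / 2) /
          (Gamma ((1 + (j : ℝ)) / 2) * Gamma ((1 + (j : ℝ)) / 2) * Gamma ((4 + (j : ℝ)) / 2)) =
    (2 : ℝ) ^ (n ^ 2) *
      ∏ k ∈ Finset.Icc 1 n, (1 / ((k : ℝ) + 1) * (Nat.choose (2 * k) k : ℝ)) :=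
  stmt_3_general n
end

section
/- For n = 2, the iterated constant term CT_{x₂} CT_{x₁} of x₁⁻¹(1-x₁)⁻²·x₂⁻¹(1-x₂)⁻²·(x₂-x₁)⁻¹·(1-x₁-x₂)⁻¹ equals 2⁴·Cat(1)·Cat(2) = 32, where the constant term in x₁ is taken first (as a formal Laurent series in x₁ over the field of formal Laurent series in x₂, with (x₂-x₁)⁻¹ and (1-x₁-x₂)⁻¹ expanded as geometric series in x₁/x₂ and (x₁+x₂) respectively). -/
/-!
With `x₂` frozen to a constant `t`, every factor `(u - x₁)⁻¹` is the power series
`∑ u^-(n+1) x₁ⁿ`, so the constant term in `x₁` is `t⁻¹ (1-t)⁻²` times the coefficient of `x₁` in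
`(1-x₁)⁻² (t-x₁)⁻¹ (1-t-x₁)⁻¹`, namely `t⁻¹ (1-t)⁻¹ (2 + t⁻¹ + (1-t)⁻¹)`. The constant term in
`t` is then read off from `(1-t)⁻ᵈ = ∑ C(d-1+n, d-1) tⁿ`: `2·C(4,2) + C(5,2) + C(5,3) = 32`.
-/

open PowerSeries HahnSeries
open scoped LaurentSeries

namespace PowerSeries

variable {K : Type*} [Field K]

theorem coeff_one_invOneSubPow_two_mul_invUnitsSub_mul_invUnitsSub (a b : Kˣ) :
    coeff 1 ((invOneSubPow K 2 : K⟦X⟧) * invUnitsSub a * invUnitsSub b)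
      = (a : K)⁻¹ * (b : K)⁻¹ * (2 + (a : K)⁻¹ + (b : K)⁻¹) := by
  simp only [coeff_one_mul, map_mul, ← coeff_zero_eq_constantCoeff_apply, coeff_invUnitsSub,
    invOneSubPow_val_succ_eq_mk_add_choose, coeff_mk, Nat.reduceAdd, Nat.choose_succ_self_right,
    Nat.choose_self, Nat.cast_ofNat, Nat.cast_one, zero_add, add_zero, pow_one, divp_eq_div,
    one_div, Units.val_pow_eq_pow_val, mul_one, one_mul]
  ring

end PowerSeries

namespace LaurentSeries

variable {K : Type*} [Field K]

theorem inv_ofPowerSeries_of_mul_eq_one {f g : K⟦X⟧} (h : f * g = 1) :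
    (ofPowerSeries ℤ K f)⁻¹ = ofPowerSeries ℤ K g :=
  inv_eq_of_mul_eq_one_right (by rw [← map_mul, h, map_one])

theorem inv_C_sub_single_one (u : Kˣ) :
    (HahnSeries.C (u : K) - single 1 1 : K⸨X⸩)⁻¹ = ofPowerSeries ℤ K (invUnitsSub u) := by
  rw [← ofPowerSeries_C, ← ofPowerSeries_X, ← map_sub]
  exact inv_ofPowerSeries_of_mul_eq_one ((mul_comm _ _).trans (invUnitsSub_mul_sub u))

theorem inv_one_sub_single_one_pow (d : ℕ) :
    ((1 - single 1 1 : K⸨X⸩) ^ d)⁻¹ = ofPowerSeries ℤ K (invOneSubPow K d) := by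
  rw [← ofPowerSeries_X, ← map_one (ofPowerSeries ℤ K), ← map_sub, ← map_pow,
    ← invOneSubPow_inv_eq_one_sub_pow]
  exact inv_ofPowerSeries_of_mul_eq_one (invOneSubPow K d).inv_val

theorem coeff_zero_single_neg_mul_ofPowerSeries (n : ℕ) (c : K) (f : K⟦X⟧) :
    (single (-n : ℤ) c * ofPowerSeries ℤ K f).coeff 0 = c * f.coeff n := by
  rw [← neg_add_cancel (n : ℤ), add_comm, coeff_single_mul_add, ofPowerSeries_apply_coeff]

theorem coeff_zero_inv_single_one_pow_mul_inv_one_sub_pow (n d : ℕ) :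
    (((single 1 1 : K⸨X⸩) ^ n)⁻¹ * ((1 - single 1 1) ^ (d + 1))⁻¹).coeff 0
      = (d + n).choose d := by
  rw [inv_one_sub_single_one_pow, single_pow, inv_single, nsmul_one, one_pow, inv_one,
    coeff_zero_single_neg_mul_ofPowerSeries, invOneSubPow_val_succ_eq_mk_add_choose, coeff_mk,
    one_mul]

theorem coeff_zero_inner_kernel (t : K) (ht₀ : t ≠ 0) (ht₁ : t ≠ 1) :
    let x₁ : K⸨X⸩ := single 1 1
    let x₂ : K⸨X⸩ := HahnSeries.C t
    (x₁⁻¹ * ((1 - x₁) ^ 2)⁻¹ * x₂⁻¹ * ((1 - x₂) ^ 2)⁻¹ * (x₂ - x₁)⁻¹ * (1 - x₁ - x₂)⁻¹).coeff 0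
      = 2 * ((t ^ 2)⁻¹ * ((1 - t) ^ 3)⁻¹) + (t ^ 3)⁻¹ * ((1 - t) ^ 3)⁻¹
          + (t ^ 2)⁻¹ * ((1 - t) ^ 4)⁻¹ := by
  intro x₁ x₂
  have hs : 1 - t ≠ 0 := sub_ne_zero.mpr ht₁.symm
  have hx₁x₂ : 1 - x₁ - x₂ = HahnSeries.C (1 - t) - x₁ := by
    rw [map_sub, map_one]; ring
  have hsq : (1 - x₂) ^ 2 = HahnSeries.C ((1 - t) ^ 2) := by
    rw [map_pow, map_sub, map_one]
  have hinv₁ : (x₂ - x₁)⁻¹ = ofPowerSeries ℤ K (invUnitsSub (Units.mk0 t ht₀)) :=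
    inv_C_sub_single_one (Units.mk0 t ht₀)
  have hinv₂ : (HahnSeries.C (1 - t) - x₁)⁻¹ = ofPowerSeries ℤ K (invUnitsSub (Units.mk0 _ hs)) :=
    inv_C_sub_single_one (Units.mk0 _ hs)
  rw [hx₁x₂, hsq, hinv₁, hinv₂, inv_single, inv_one, inv_one_sub_single_one_pow,
    ← map_inv₀ (HahnSeries.C (Γ := ℤ)) t, ← map_inv₀ (HahnSeries.C (Γ := ℤ))]
  have regroup : ∀ (A B C : K⸨X⸩) (a b : K),
      single (-1) 1 * A * HahnSeries.C a * HahnSeries.C b * B * C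
        = single (-((1 : ℕ) : ℤ)) (a * b) * (A * B * C) := by
    intro A B C a b
    calc _ = single (-1) 1 * single 0 a * single 0 b * (A * B * C) := by
            simp only [HahnSeries.C_apply]; ring
      _ = _ := by simp only [single_mul_single]; norm_num
  rw [regroup, ← map_mul, ← map_mul, coeff_zero_single_neg_mul_ofPowerSeries,
    coeff_one_invOneSubPow_two_mul_invUnitsSub_mul_invUnitsSub]
  simp only [Units.val_mk0]
  field_simp

end LaurentSeries

/-- The n = 2 case of the Mészáros–Morales conjecture:
`CT_{x₂} CT_{x₁} [x₁⁻¹(1-x₁)⁻² x₂⁻¹(1-x₂)⁻² (x₂-x₁)⁻¹ (1-x₁-x₂)⁻¹] = 2⁴·Cat(1)·Cat(2) = 32`,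
where the inner variable `x₁` ranges over Laurent series with coefficients in the field
of Laurent series in `x₂` (so inverses are the iterated Laurent expansions with
`|x₁| < |x₂|`), and `CT` picks out the coefficient of degree 0. -/
theorem stmt_4 :
    let x₁ : LaurentSeries (LaurentSeries ℚ) := HahnSeries.single 1 1
    let x₂ : LaurentSeries (LaurentSeries ℚ) := HahnSeries.C (HahnSeries.single 1 1)
    (((x₁⁻¹ * ((1 - x₁) ^ 2)⁻¹ * x₂⁻¹ * ((1 - x₂) ^ 2)⁻¹ *
        (x₂ - x₁)⁻¹ * (1 - x₁ - x₂)⁻¹).coeff 0).coeff 0) = 32 ∧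
    (32 : ℚ) = 2 ^ 4 * (1 / ((1 : ℚ) + 1) * (Nat.choose 2 1 : ℚ)) *
        (1 / ((2 : ℚ) + 1) * (Nat.choose 4 2 : ℚ)) := by
  refine ⟨?_, by norm_num [Nat.choose]⟩
  have ht₀ : (single 1 1 : ℚ⸨X⸩) ≠ 0 := single_ne_zero one_ne_zero
  have ht₁ : (single 1 1 : ℚ⸨X⸩) ≠ 1 := fun h ↦ by
    simpa using congrArg (HahnSeries.coeff · 0) h
  rw [LaurentSeries.coeff_zero_inner_kernel _ ht₀ ht₁, two_mul, coeff_add, coeff_add, coeff_add,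
    LaurentSeries.coeff_zero_inv_single_one_pow_mul_inv_one_sub_pow 2 2,
    LaurentSeries.coeff_zero_inv_single_one_pow_mul_inv_one_sub_pow 3 2,
    LaurentSeries.coeff_zero_inv_single_one_pow_mul_inv_one_sub_pow 2 3]
  norm_num [Nat.choose]
end

section
/- For every integer n ≥ 1 and a = 2, c = 1/2, the right-hand side of the type D formula, 2^{2an+4c·n(n-1)/2−2n}·(1/n!)·∏_{j=0}^{n-1} Γ(a−1/2+(n−1+j)c)·Γ(c)/(Γ(1/2+jc)·Γ(c+jc)·Γ(a+jc)), equals 2^{n²}·∏_{k=1}^n Cat(k). -/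
open Real Finset

/-- numerator Gamma factor -/
noncomputable def fG (n j : ℕ) : ℝ := Real.Gamma (((n : ℝ) + 2 + (j : ℝ)) / 2)

/-- the part of each product term depending only on `j` -/
noncomputable def gG (j : ℕ) : ℝ :=
  Real.Gamma (1 / 2) /
    (Real.Gamma (1 / 2 + (j : ℝ) * (1 / 2)) * Real.Gamma (1 / 2 + (j : ℝ) * (1 / 2)) *
      Real.Gamma (2 + (j : ℝ) * (1 / 2)))

lemma fG_ne (n j : ℕ) : fG n j ≠ 0 := by
  have : (0:ℝ) < ((n : ℝ) + 2 + (j : ℝ)) / 2 := by positivity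
  exact (Real.Gamma_pos_of_pos this).ne'

lemma shift_prod (n : ℕ) :
    ∏ j ∈ Finset.range (n + 1), fG n (j + 1) =
      (∏ j ∈ Finset.range n, fG n j) * (fG n n * fG n (n + 1) / fG n 0) := by
  apply mul_right_cancel₀ (fG_ne n 0)
  rw [← Finset.prod_range_succ' (fG n) (n + 1), Finset.prod_range_succ, Finset.prod_range_succ]
  field_simp
  rw [mul_div_cancel_right₀ _ (fG_ne n 0), mul_assoc]

lemma key (n : ℕ) :
    (2 : ℝ) ^ (2 * n + 2) * (1 / ((n : ℝ) + 1)) *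
      (fG n n * fG n (n + 1) / fG n 0 * gG n) =
    (2 : ℝ) ^ (2 * n + 1) * (1 / (((n:ℝ) + 1) + 1) * ((2 * (n + 1)).choose (n + 1) : ℝ)) := by
  have spos : (0:ℝ) < Real.sqrt π := Real.sqrt_pos.mpr Real.pi_pos
  have hnfac : ((n.factorial : ℝ)) ≠ 0 := by positivity
  -- Gamma evaluations
  have hfn : fG n n = (n.factorial : ℝ) := by
    rw [fG, show ((n : ℝ) + 2 + (n : ℝ)) / 2 = (n : ℝ) + 1 by ring, Real.Gamma_nat_eq_factorial]
  have hf0 : fG n 0 = Real.Gamma (((n : ℝ) + 2) / 2) := by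
    rw [fG]; norm_num
  have e1 : (2 : ℝ) ^ (1 - 2 * ((n:ℝ) + 1)) = ((2:ℝ) ^ (2 * n + 1))⁻¹ := by
    rw [show (1 - 2 * ((n:ℝ) + 1)) = -((2 * n + 1 : ℕ) : ℝ) by push_cast; ring,
      Real.rpow_neg (by norm_num), Real.rpow_natCast]
  have e2 : (2 : ℝ) ^ (1 - ((n:ℝ) + 1)) = ((2:ℝ) ^ n)⁻¹ := by
    rw [show (1 - ((n:ℝ) + 1)) = -((n : ℕ) : ℝ) by push_cast; ring,
      Real.rpow_neg (by norm_num), Real.rpow_natCast]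
  have h2n : Real.Gamma (2 * ((n:ℝ) + 1)) = ((2 * n + 1).factorial : ℝ) := by
    rw [show 2 * ((n:ℝ) + 1) = ((2 * n + 1 : ℕ) : ℝ) + 1 by push_cast; ring,
      Real.Gamma_nat_eq_factorial]
  have d1 := Real.Gamma_mul_Gamma_add_half ((n:ℝ) + 1)
  rw [h2n, e1, Real.Gamma_nat_eq_factorial] at d1
  have hfn1 : fG n (n + 1) =
      ((2 * n + 1).factorial : ℝ) * ((2:ℝ) ^ (2 * n + 1))⁻¹ * Real.sqrt π / (n.factorial : ℝ) := by
    rw [fG, show ((n : ℝ) + 2 + ((n + 1 : ℕ) : ℝ)) / 2 = (n : ℝ) + 1 + 1 / 2 by push_cast; ring,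
      eq_div_iff hnfac]
    linear_combination d1
  -- duplication at (n+1)/2
  have d2 := Real.Gamma_mul_Gamma_add_half (((n:ℝ) + 1) / 2)
  rw [show 2 * (((n:ℝ) + 1) / 2) = ((n:ℝ)) + 1 by ring, e2, Real.Gamma_nat_eq_factorial,
    show ((n:ℝ) + 1) / 2 + 1 / 2 = ((n:ℝ) + 2) / 2 by ring] at d2
  have hu : Real.Gamma (((n:ℝ) + 1) / 2) ≠ 0 :=
    (Real.Gamma_pos_of_pos (by positivity)).ne'
  have hv : Real.Gamma (((n:ℝ) + 2) / 2) =
      (n.factorial : ℝ) * ((2:ℝ) ^ n)⁻¹ * Real.sqrt π / Real.Gamma (((n:ℝ) + 1) / 2) := by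
    rw [eq_div_iff hu]; linear_combination d2
  have hCn : Real.Gamma (1 / 2 + (n:ℝ) * (1 / 2)) = Real.Gamma (((n:ℝ) + 1) / 2) := by
    norm_num; ring_nf
  have hD : Real.Gamma (2 + (n:ℝ) * (1 / 2)) =
      (((n:ℝ) + 2) / 2) * Real.Gamma (((n:ℝ) + 2) / 2) := by
    rw [show (2 + (n:ℝ) * (1 / 2)) = ((n:ℝ) + 2) / 2 + 1 by ring,
      Real.Gamma_add_one (by positivity)]
  -- choose
  have hch : ((2 * (n + 1)).choose (n + 1) : ℝ) =
      ((2 * (n + 1)).factorial : ℝ) / (((n + 1).factorial : ℝ) * ((n + 1).factorial : ℝ)) := by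
    rw [eq_div_iff (by positivity)]
    have h := Nat.choose_mul_factorial_mul_factorial (show n + 1 ≤ 2 * (n + 1) by omega)
    rw [show 2 * (n + 1) - (n + 1) = n + 1 from by omega] at h
    have h' : ((2 * (n + 1)).choose (n + 1) * ((n + 1).factorial * (n + 1).factorial) : ℕ) =
        (2 * (n + 1)).factorial := by rw [← h]; ring
    exact_mod_cast h'
  have hf1 : (((n + 1).factorial : ℕ) : ℝ) = ((n:ℝ) + 1) * (n.factorial : ℝ) := by
    push_cast [Nat.factorial_succ]; ring
  have hf2 : (((2 * (n + 1)).factorial : ℕ) : ℝ) = ((2*(n:ℝ)) + 2) * ((2 * n + 1).factorial : ℝ) := by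
    rw [show 2 * (n + 1) = (2 * n + 1) + 1 by ring, Nat.factorial_succ]; push_cast; ring
  rw [gG, hfn, hfn1, hf0, hCn, hD, hv, hch, hf1, hf2, Real.Gamma_one_half_eq]
  have h2p : ((2:ℝ) ^ n) ≠ 0 := by positivity
  have h2p2 : ((2:ℝ) ^ (2 * n + 1)) ≠ 0 := by positivity
  have hn1 : ((n:ℝ) + 1) ≠ 0 := by positivity
  have hn2 : ((n:ℝ) + 2) ≠ 0 := by positivity
  field_simp
  ring

lemma aux (n : ℕ) :
    (2 : ℝ) ^ (n ^ 2 + n) * (1 / (n.factorial : ℝ)) *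
      ∏ j ∈ Finset.range n, (fG n j * gG j) =
    (2 : ℝ) ^ (n ^ 2) *
      ∏ k ∈ Finset.Icc 1 n, (1 / ((k : ℝ) + 1) * (Nat.choose (2 * k) k : ℝ)) := by
  induction n with
  | zero => simp
  | succ n ih =>
    have hterm : ∀ j ∈ Finset.range (n + 1), fG (n + 1) j * gG j = fG n (j + 1) * gG j := by
      intro j _
      have : fG (n + 1) j = fG n (j + 1) := by
        rw [fG, fG]
        congr 1
        push_cast
        ring
      rw [this]
    calc (2 : ℝ) ^ ((n + 1) ^ 2 + (n + 1)) * (1 / ((n + 1).factorial : ℝ)) *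
          ∏ j ∈ Finset.range (n + 1), (fG (n + 1) j * gG j)
        = ((2 : ℝ) ^ (n ^ 2 + n) * (1 / (n.factorial : ℝ)) *
            ∏ j ∈ Finset.range n, (fG n j * gG j)) *
          ((2 : ℝ) ^ (2 * n + 2) * (1 / ((n : ℝ) + 1)) *
            (fG n n * fG n (n + 1) / fG n 0 * gG n)) := by
          rw [Finset.prod_congr rfl hterm, Finset.prod_mul_distrib, shift_prod,
            Finset.prod_range_succ,
            show (n + 1) ^ 2 + (n + 1) = (n ^ 2 + n) + (2 * n + 2) by ring, pow_add,
            show (1 / (((n + 1).factorial : ℕ) : ℝ)) = 1 / (n.factorial : ℝ) * (1 / ((n:ℝ) + 1)) by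
              rw [Nat.factorial_succ]
              push_cast
              rw [div_mul_div_comm, one_mul, mul_comm]]
          rw [Finset.prod_mul_distrib]
          ring
      _ = ((2 : ℝ) ^ (n ^ 2) *
            ∏ k ∈ Finset.Icc 1 n, (1 / ((k : ℝ) + 1) * (Nat.choose (2 * k) k : ℝ))) *
          ((2 : ℝ) ^ (2 * n + 1) *
            (1 / (((n:ℝ) + 1) + 1) * ((2 * (n + 1)).choose (n + 1) : ℝ))) := by
          rw [ih, key]
      _ = (2 : ℝ) ^ ((n + 1) ^ 2) *
          ∏ k ∈ Finset.Icc 1 (n + 1), (1 / ((k : ℝ) + 1) * (Nat.choose (2 * k) k : ℝ)) := by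
          rw [Finset.prod_Icc_succ_top (Nat.le_add_left 1 n),
            show (n + 1) ^ 2 = n ^ 2 + (2 * n + 1) by ring, pow_add]
          push_cast
          ring

/-- The right-hand side of the type D formula at `a = 2`, `c = 1/2` equals
`2^{n²} ∏_{k=1}^n Cat(k)`. -/
theorem stmt_10 (n : ℕ) (hn : 1 ≤ n) :
    (2 : ℝ) ^ (2 * 2 * (n : ℝ) + 4 * (1 / 2) * ((n : ℝ) * ((n : ℝ) - 1) / 2) - 2 * (n : ℝ)) *
      (1 / (n.factorial : ℝ)) *
      ∏ j ∈ Finset.range n,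
        Gamma (2 - 1 / 2 + ((n : ℝ) - 1 + j) * (1 / 2)) * Gamma (1 / 2) /
          (Gamma (1 / 2 + (j : ℝ) * (1 / 2)) * Gamma (1 / 2 + (j : ℝ) * (1 / 2)) *
            Gamma (2 + (j : ℝ) * (1 / 2))) =
    (2 : ℝ) ^ (n ^ 2) *
      ∏ k ∈ Finset.Icc 1 n, (1 / ((k : ℝ) + 1) * (Nat.choose (2 * k) k : ℝ)) := by
  have hpow : (2 : ℝ) ^ (2 * 2 * (n : ℝ) + 4 * (1 / 2) * ((n : ℝ) * ((n : ℝ) - 1) / 2) - 2 * (n : ℝ))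
      = (2 : ℝ) ^ (n ^ 2 + n) := by
    rw [← Real.rpow_natCast 2 (n ^ 2 + n)]
    congr 1
    push_cast
    ring
  have hterm : ∀ j ∈ Finset.range n,
      Gamma (2 - 1 / 2 + ((n : ℝ) - 1 + j) * (1 / 2)) * Gamma (1 / 2) /
        (Gamma (1 / 2 + (j : ℝ) * (1 / 2)) * Gamma (1 / 2 + (j : ℝ) * (1 / 2)) *
          Gamma (2 + (j : ℝ) * (1 / 2))) = fG n j * gG j := by
    intro j _
    rw [fG, gG, mul_div_assoc]
    congr 2
    ring_nf
  rw [hpow, Finset.prod_congr rfl hterm]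
  exact aux n
end
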